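/- arXiv:1004.2658 — 5 statements merged into one kernel-verified Lean document; each statement's English description precedes it below -/
import Mathlib

section
/- Let g be analytic and injective on the unit disk E = {z ∈ ℂ : |z| < 1} with g(0) = 0, g′(0) = 1, g′(z) ≠ 0 for all z ∈ E, and Re(1 + z g″(z)/g′(z)) > 0 for all z ∈ E (i.e., g is convex univalent). Then for every real α with 0 < α ≤ 1 and every z ∈ E with z ≠ 0, Re((g(z)/z)^α) > 1/2, where (·)^α denotes the principal complex power. -/
/-!
Jack's lemma: if `ω` is analytic on the disk, `ω 0 = 0` and `‖ω‖` reaches `1`, then at a point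
`z₀ ≠ 0` of smallest modulus with `‖ω z₀‖ = 1` one has `z₀ ω'(z₀) = k ω(z₀)` with `k ≥ 1`: the
tangential derivative of `‖ω‖²` vanishes there, and the radial one is at least what the Schwarz
bound `‖ω z‖ ≤ ‖z‖ / ‖z₀‖` forces. Applied to `ω = (P - 1) / P`, which sends `Re P > 1/2` onto the
unit disk, it says: if `P 0 = 1` and `Re P ≤ 1/2` somewhere, then at some `z₀ ≠ 0` we have
`Re P(z₀) = 1/2` and `z₀ P'(z₀) / P(z₀) = k (P(z₀) - 1)` with `k ≥ 1`.

Let `q = g(z)/z` and `p = z g'/g = g'/q`. For `P = p` the convexity expression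
`1 + z g''/g' = p + z p'/p` would have real part `(1 - k)/2 ≤ 0`, so `Re p > 1/2`. For `P = q`,
`p = 1 + z q'/q` would have real part `1 - k/2 ≤ 1/2`, so `Re q > 1/2`. Finally `w ↦ w ^ α`
preserves `Re w > 1/2` for `0 < α ≤ 1`, because concavity of `cos` and weighted AM-GM give
`Re w ^ α = ‖w‖ ^ α cos (α arg w) ≥ (‖w‖ cos (arg w)) ^ α = (Re w) ^ α`.
-/

open Complex ComplexConjugate Metric Set Filter Topology
open scoped Real

lemma cos_rpow_le_cos_mul {φ α : ℝ} (hφ : |φ| ≤ π / 2) (hα0 : 0 ≤ α) (hα1 : α ≤ 1) :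
    Real.cos φ ^ α ≤ Real.cos (α * φ) := by
  have hφ' : φ ∈ Icc (-(π / 2)) (π / 2) := abs_le.1 hφ
  have hzero : (0 : ℝ) ∈ Icc (-(π / 2)) (π / 2) := by constructor <;> linarith [Real.pi_pos]
  calc Real.cos φ ^ α = Real.cos φ ^ α * 1 ^ (1 - α) := by simp
    _ ≤ α * Real.cos φ + (1 - α) * 1 :=
      Real.geom_mean_le_arith_mean2_weighted hα0 (by linarith) (Real.cos_nonneg_of_mem_Icc hφ')
        zero_le_one (by ring)
    _ ≤ Real.cos (α * φ) := by
      simpa using strictConcaveOn_cos_Icc.concaveOn.2 hφ' hzero hα0 (by linarith) (by ring)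

lemma half_lt_re_cpow {w : ℂ} (hw : 1 / 2 < w.re) {α : ℝ} (hα0 : 0 < α) (hα1 : α ≤ 1) :
    1 / 2 < (w ^ (α : ℂ)).re := by
  have harg : |arg w| ≤ π / 2 := abs_arg_le_pi_div_two_iff.2 (by linarith)
  calc (1 / 2 : ℝ) = (1 / 2) ^ (1 : ℝ) := (Real.rpow_one _).symm
    _ ≤ (1 / 2) ^ α := Real.rpow_le_rpow_of_exponent_ge (by norm_num) (by norm_num) hα1
    _ < w.re ^ α := Real.rpow_lt_rpow (by norm_num) hw hα0
    _ = ‖w‖ ^ α * Real.cos (arg w) ^ α := by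
      rw [← norm_mul_cos_arg, Real.mul_rpow (norm_nonneg _)
        (Real.cos_nonneg_of_mem_Icc (abs_le.1 harg))]
    _ ≤ ‖w‖ ^ α * Real.cos (arg w * α) := by
      rw [mul_comm (arg w)]
      gcongr
      exact cos_rpow_le_cos_mul harg hα0.le hα1
    _ = (w ^ (α : ℂ)).re := (cpow_ofReal_re w α).symm

lemma HasDerivAt.nonneg_of_le_left {u : ℝ → ℝ} {u' a : ℝ} (hu : HasDerivAt u u' a)
    (hle : ∀ᶠ t in 𝓝[<] a, u t ≤ u a) : 0 ≤ u' := by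
  refine ge_of_tendsto (hasDerivAt_iff_tendsto_slope_left_right.1 hu).1 ?_
  filter_upwards [hle, self_mem_nhdsWithin] with t ht hta
  rw [slope_def_field]
  exact div_nonneg_of_nonpos (sub_nonpos.2 ht) (sub_nonpos.2 (le_of_lt hta))

lemma im_conj_mul_mul_deriv_eq_zero {f : ℂ → ℂ} {f' z₀ : ℂ} (hf : HasDerivAt f f' z₀)
    (hmax : ∀ θ : ℝ, ‖f (z₀ * exp (θ * I))‖ ≤ ‖f z₀‖) :
    (conj (f z₀) * (z₀ * f')).im = 0 := by
  have hcurve : HasDerivAt (fun θ : ℝ => z₀ * exp (θ * I)) (z₀ * I) 0 := by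
    simpa using (((hasDerivAt_id (0 : ℝ)).ofReal_comp.mul_const I).cexp.const_mul z₀)
  have hsq : HasDerivAt (fun θ : ℝ => ‖f (z₀ * exp (θ * I))‖ ^ 2)
      (2 * inner ℝ (f z₀) (f' * (z₀ * I))) 0 := by
    simpa using (HasDerivAt.comp_of_eq _ hf hcurve (by simp)).norm_sq
  have h := IsLocalMax.hasDerivAt_eq_zero (Eventually.of_forall fun θ =>
    pow_le_pow_left₀ (norm_nonneg _) ((hmax θ).trans_eq (by simp)) 2) hsq
  rw [Complex.inner, show f' * (z₀ * I) * conj (f z₀) = conj (f z₀) * (z₀ * f') * I by ring,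
    mul_I_re] at h
  linarith

lemma sq_norm_le_re_conj_mul_mul_deriv {f : ℂ → ℂ} {f' z₀ : ℂ} (hf0 : f 0 = 0)
    (hd : DifferentiableOn ℂ f (ball 0 ‖z₀‖)) (hf : HasDerivAt f f' z₀)
    (hmax : ∀ z ∈ ball (0 : ℂ) ‖z₀‖, ‖f z‖ ≤ ‖f z₀‖) :
    ‖f z₀‖ ^ 2 ≤ (conj (f z₀) * (z₀ * f')).re := by
  rcases eq_or_ne z₀ 0 with rfl | hz₀
  · simp [hf0]
  have hr : 0 < ‖z₀‖ := norm_pos_iff.2 hz₀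
  have hschwarz : ∀ t ∈ Ioo (0 : ℝ) 1, ‖f (t * z₀)‖ ≤ t * ‖f z₀‖ := by
    intro t ht
    have hmem : (t : ℂ) * z₀ ∈ ball (0 : ℂ) ‖z₀‖ := by
      rw [mem_ball_zero_iff, norm_mul, norm_real, Real.norm_of_nonneg ht.1.le]
      exact mul_lt_of_lt_one_left hr ht.2
    have h := dist_le_div_mul_dist_of_mapsTo_ball hd
      (fun z hz => by simpa [hf0] using hmax z hz) hmem
    rw [hf0, dist_zero_right, dist_zero_right, norm_mul, norm_real,
      Real.norm_of_nonneg ht.1.le] at h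
    exact h.trans_eq (by field_simp)
  have hcurve : HasDerivAt (fun t : ℝ => (t : ℂ) * z₀) z₀ 1 := by
    simpa using (hasDerivAt_id (1 : ℝ)).ofReal_comp.mul_const z₀
  have hsq : HasDerivAt (fun t : ℝ => ‖f (t * z₀)‖ ^ 2 - t ^ 2 * ‖f z₀‖ ^ 2)
      (2 * inner ℝ (f z₀) (f' * z₀) - 2 * ‖f z₀‖ ^ 2) 1 := by
    simpa only [Function.comp_def, ofReal_one, one_mul, one_pow, Nat.cast_ofNat, mul_one,
      Nat.add_one_sub_one, pow_one] using
      (HasDerivAt.comp_of_eq _ hf hcurve (by simp)).norm_sq.fun_sub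
        ((hasDerivAt_pow 2 (1 : ℝ)).mul_const (‖f z₀‖ ^ 2))
  have h := hsq.nonneg_of_le_left <| by
    filter_upwards [Ioo_mem_nhdsLT zero_lt_one] with t ht
    have := pow_le_pow_left₀ (norm_nonneg _) (hschwarz t ht) 2
    simp only [ofReal_one, one_mul, one_pow, sub_self]
    nlinarith
  rw [Complex.inner, show f' * z₀ * conj (f z₀) = conj (f z₀) * (z₀ * f') by ring] at h
  linarith

lemma exists_one_le_mul_deriv_eq_of_isMaxOn {f : ℂ → ℂ} {z₀ : ℂ} (hf0 : f 0 = 0)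
    (hd : DifferentiableOn ℂ f (ball 0 ‖z₀‖)) (hf : DifferentiableAt ℂ f z₀)
    (hmax : IsMaxOn (‖f ·‖) (closedBall 0 ‖z₀‖) z₀) (hfz₀ : f z₀ ≠ 0) :
    ∃ k : ℝ, 1 ≤ k ∧ z₀ * deriv f z₀ = k * f z₀ := by
  set c := conj (f z₀) * (z₀ * deriv f z₀)
  have him : c.im = 0 := im_conj_mul_mul_deriv_eq_zero hf.hasDerivAt fun θ =>
    hmax (by simp [norm_exp])
  have hre : ‖f z₀‖ ^ 2 ≤ c.re := sq_norm_le_re_conj_mul_mul_deriv hf0 hd hf.hasDerivAt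
    fun z hz => hmax (ball_subset_closedBall hz)
  have hpos : 0 < ‖f z₀‖ ^ 2 := by positivity
  refine ⟨c.re / ‖f z₀‖ ^ 2, (one_le_div hpos).2 hre,
    mul_left_cancel₀ ((map_ne_zero conj).2 hfz₀) ?_⟩
  have hc : c = c.re := Complex.ext rfl (by simp [him])
  calc conj (f z₀) * (z₀ * deriv f z₀) = c.re := hc
    _ = _ := by
      have hn : (‖f z₀‖ : ℂ) ≠ 0 := ofReal_ne_zero.2 (norm_ne_zero_iff.2 hfz₀)
      rw [mul_left_comm, conj_mul']
      push_cast
      field_simp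

lemma exists_isMaxOn_norm_eq_one {ω : ℂ → ℂ} {R : ℝ} (hω : ContinuousOn ω (ball 0 R))
    (hω0 : ‖ω 0‖ < 1) {z₁ : ℂ} (hz₁ : z₁ ∈ ball (0 : ℂ) R) (h₁ : 1 ≤ ‖ω z₁‖) :
    ∃ z₀ ∈ ball (0 : ℂ) R, z₀ ≠ 0 ∧ ‖ω z₀‖ = 1 ∧ IsMaxOn (‖ω ·‖) (closedBall 0 ‖z₀‖) z₀ := by
  have hsub : closedBall (0 : ℂ) ‖z₁‖ ⊆ ball 0 R := closedBall_subset_ball (mem_ball_zero_iff.1 hz₁)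
  set T := closedBall (0 : ℂ) ‖z₁‖ ∩ ω ⁻¹' {w | 1 ≤ ‖w‖}
  have hT : IsCompact T := (isCompact_closedBall _ _).of_isClosed_subset
    ((hω.mono hsub).preimage_isClosed_of_isClosed isClosed_closedBall
      (isClosed_le continuous_const continuous_norm)) inter_subset_left
  obtain ⟨z₀, ⟨hz₀T, hz₀1⟩, hmin⟩ :=
    hT.exists_isMinOn ⟨z₁, by simp, h₁⟩ continuous_norm.continuousOn
  have hz₀ : z₀ ≠ 0 := by
    rintro rfl
    exact (lt_of_lt_of_le hω0 hz₀1).false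
  have hz₀R : closedBall (0 : ℂ) ‖z₀‖ ⊆ ball 0 R :=
    (closedBall_subset_closedBall (mem_closedBall_zero_iff.1 hz₀T)).trans hsub
  have hball : MapsTo ω (ball 0 ‖z₀‖) (closedBall 0 1) := by
    intro z hz
    rw [mem_ball_zero_iff] at hz
    rw [mem_closedBall_zero_iff]
    by_contra! h
    have := hmin ⟨mem_closedBall_zero_iff.2 (hz.le.trans (mem_closedBall_zero_iff.1 hz₀T)), h.le⟩
    exact (hz.trans_le this).false
  have hclosed : MapsTo ω (closedBall 0 ‖z₀‖) (closedBall 0 1) := by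
    have hcl : closure (ball (0 : ℂ) ‖z₀‖) = closedBall 0 ‖z₀‖ :=
      closure_ball 0 (norm_ne_zero_iff.2 hz₀)
    simpa [hcl] using hball.closure_of_continuousOn (hcl ▸ hω.mono hz₀R)
  have hz₀1' : ‖ω z₀‖ = 1 := le_antisymm (mem_closedBall_zero_iff.1 (hclosed (by simp))) hz₀1
  exact ⟨z₀, hz₀R (by simp), hz₀, hz₀1', fun z hz =>
    (mem_closedBall_zero_iff.1 (hclosed hz)).trans_eq hz₀1'.symm⟩

lemma exists_norm_eq_one_mul_deriv_eq {ω : ℂ → ℂ} {R : ℝ} (hω : DifferentiableOn ℂ ω (ball 0 R))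
    (hω0 : ω 0 = 0) {z₁ : ℂ} (hz₁ : z₁ ∈ ball (0 : ℂ) R) (h₁ : 1 ≤ ‖ω z₁‖) :
    ∃ z₀ ∈ ball (0 : ℂ) R, z₀ ≠ 0 ∧ ‖ω z₀‖ = 1 ∧
      ∃ k : ℝ, 1 ≤ k ∧ z₀ * deriv ω z₀ = k * ω z₀ := by
  obtain ⟨z₀, hz₀, hz₀0, hnorm, hmax⟩ :=
    exists_isMaxOn_norm_eq_one hω.continuousOn (by simp [hω0]) hz₁ h₁
  have hsub : ball (0 : ℂ) ‖z₀‖ ⊆ ball 0 R := ball_subset_ball (mem_ball_zero_iff.1 hz₀).le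
  obtain ⟨k, hk, h⟩ := exists_one_le_mul_deriv_eq_of_isMaxOn hω0 (hω.mono hsub)
    (hω.differentiableAt (isOpen_ball.mem_nhds hz₀)) hmax (norm_ne_zero_iff.1 (by simp [hnorm]))
  exact ⟨z₀, hz₀, hz₀0, hnorm, k, hk, h⟩

lemma sq_norm_sub_one (w : ℂ) : ‖w - 1‖ ^ 2 = ‖w‖ ^ 2 + 1 - 2 * w.re := by
  simp only [Complex.sq_norm, normSq_apply, sub_re, sub_im, one_re, one_im]
  ring

lemma exists_re_eq_half_mul_logDeriv_eq {P : ℂ → ℂ} (hP : DifferentiableOn ℂ P (ball 0 1))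
    (hP0 : P 0 = 1) (hPne : ∀ z ∈ ball (0 : ℂ) 1, P z ≠ 0) {z₁ : ℂ}
    (hz₁ : z₁ ∈ ball (0 : ℂ) 1) (h₁ : (P z₁).re ≤ 1 / 2) :
    ∃ z₀ ∈ ball (0 : ℂ) 1, z₀ ≠ 0 ∧ (P z₀).re = 1 / 2 ∧
      ∃ k : ℝ, 1 ≤ k ∧ z₀ * logDeriv P z₀ = k * (P z₀ - 1) := by
  set ω := fun z => (P z - 1) / P z
  have hnorm : ∀ z ∈ ball (0 : ℂ) 1, ‖ω z‖ ^ 2 = 1 + (1 - 2 * (P z).re) / ‖P z‖ ^ 2 := by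
    intro z hz
    have := norm_ne_zero_iff.2 (hPne z hz)
    simp only [ω, norm_div, div_pow, sq_norm_sub_one]
    field_simp
    ring
  have hω1 : 1 ≤ ‖ω z₁‖ := le_of_pow_le_pow_left₀ two_ne_zero (norm_nonneg _) <| by
    rw [one_pow, hnorm z₁ hz₁, le_add_iff_nonneg_right]
    exact div_nonneg (by linarith) (sq_nonneg _)
  have hωd : DifferentiableOn ℂ ω (ball 0 1) := (hP.sub_const 1).div hP hPne
  obtain ⟨z₀, hz₀, hz₀0, hnorm₀, k, hk, hjack⟩ :=
    exists_norm_eq_one_mul_deriv_eq hωd (by simp [ω, hP0]) hz₁ hω1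
  have hP₀ := hPne z₀ hz₀
  refine ⟨z₀, hz₀, hz₀0, ?_, k, hk, ?_⟩
  · have h := hnorm z₀ hz₀
    rw [hnorm₀, one_pow, left_eq_add, div_eq_zero_iff,
      or_iff_left (pow_ne_zero 2 (norm_ne_zero_iff.2 hP₀))] at h
    linarith
  · have hP' := (hP.differentiableAt (isOpen_ball.mem_nhds hz₀)).hasDerivAt
    have hω' : HasDerivAt ω _ z₀ := (hP'.sub_const 1).div hP' hP₀
    rw [hω'.deriv] at hjack
    rw [logDeriv_apply]
    simp only [ω] at hjack
    field_simp at hjack ⊢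
    linear_combination hjack

lemma half_lt_re_of_re_add_mul_logDeriv_pos {P : ℂ → ℂ} (hP : DifferentiableOn ℂ P (ball 0 1))
    (hP0 : P 0 = 1) (hPne : ∀ z ∈ ball (0 : ℂ) 1, P z ≠ 0)
    (h : ∀ z ∈ ball (0 : ℂ) 1, z ≠ 0 → 0 < (P z + z * logDeriv P z).re)
    {z : ℂ} (hz : z ∈ ball (0 : ℂ) 1) : 1 / 2 < (P z).re := by
  by_contra! h₁
  obtain ⟨z₀, hz₀, hz₀0, hre, k, hk, hjack⟩ := exists_re_eq_half_mul_logDeriv_eq hP hP0 hPne hz h₁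
  have := h z₀ hz₀ hz₀0
  simp only [hjack, add_re, re_ofReal_mul, sub_re, one_re, hre] at this
  linarith

lemma half_lt_re_of_half_lt_re_one_add_mul_logDeriv {P : ℂ → ℂ}
    (hP : DifferentiableOn ℂ P (ball 0 1)) (hP0 : P 0 = 1) (hPne : ∀ z ∈ ball (0 : ℂ) 1, P z ≠ 0)
    (h : ∀ z ∈ ball (0 : ℂ) 1, z ≠ 0 → 1 / 2 < (1 + z * logDeriv P z).re)
    {z : ℂ} (hz : z ∈ ball (0 : ℂ) 1) : 1 / 2 < (P z).re := by
  by_contra! h₁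
  obtain ⟨z₀, hz₀, hz₀0, hre, k, hk, hjack⟩ := exists_re_eq_half_mul_logDeriv_eq hP hP0 hPne hz h₁
  have := h z₀ hz₀ hz₀0
  simp only [hjack, add_re, re_ofReal_mul, sub_re, one_re, hre] at this
  linarith

section dslope

variable {𝕜 : Type*} [NontriviallyNormedField 𝕜]

lemma dslope_ne_zero_of_injOn {E : Type*} [NormedAddCommGroup E] [NormedSpace 𝕜 E]
    {f : 𝕜 → E} {s : Set 𝕜} {a b : 𝕜} (hf : InjOn f s) (ha : a ∈ s) (hb : b ∈ s)
    (hfa : deriv f a ≠ 0) : dslope f a b ≠ 0 := by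
  rcases eq_or_ne b a with rfl | hba
  · rwa [dslope_same]
  rw [dslope_of_ne _ hba, slope_def_module]
  exact smul_ne_zero (inv_ne_zero (sub_ne_zero.2 hba)) (sub_ne_zero.2 (hf.ne hb ha hba))

lemma deriv_div_dslope {f : 𝕜 → 𝕜} {a z : 𝕜} (hf : DifferentiableAt 𝕜 (dslope f a) z)
    (hz : dslope f a z ≠ 0) :
    deriv f z / dslope f a z = 1 + (z - a) * logDeriv (dslope f a) z := by
  have hf' : HasDerivAt (fun w => f a + (w - a) * dslope f a w)
      (1 * dslope f a z + (z - a) * deriv (dslope f a) z) z :=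
    (((hasDerivAt_id (z : 𝕜)).sub_const a).mul hf.hasDerivAt).const_add (f a)
  have heq : (fun w => f a + (w - a) * dslope f a w) = f :=
    funext fun w => by rw [← smul_eq_mul, sub_smul_dslope, add_sub_cancel]
  rw [heq] at hf'
  rw [hf'.deriv, logDeriv_apply]
  field_simp

end dslope

lemma half_lt_re_deriv_div_dslope {g : ℂ → ℂ} (hgd : DifferentiableOn ℂ g (ball 0 1))
    (hg1 : deriv g 0 = 1) (hq : ∀ z ∈ ball (0 : ℂ) 1, dslope g 0 z ≠ 0)
    (hg' : ∀ z ∈ ball (0 : ℂ) 1, deriv g z ≠ 0)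
    (hgc : ∀ z ∈ ball (0 : ℂ) 1, 0 < (1 + z * deriv (deriv g) z / deriv g z).re)
    {z : ℂ} (hz : z ∈ ball (0 : ℂ) 1) : 1 / 2 < (deriv g z / dslope g 0 z).re := by
  have hqd : DifferentiableOn ℂ (dslope g 0) (ball 0 1) :=
    (differentiableOn_dslope (ball_mem_nhds 0 one_pos)).2 hgd
  -- `p = z g' / g`, in a form that is analytic at `0`
  set p := fun w => deriv g w / dslope g 0 w
  have hpd : DifferentiableOn ℂ p (ball 0 1) := (hgd.deriv isOpen_ball).div hqd hq
  have hpne : ∀ w ∈ ball (0 : ℂ) 1, p w ≠ 0 := fun w hw => div_ne_zero (hg' w hw) (hq w hw)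
  refine half_lt_re_of_re_add_mul_logDeriv_pos hpd (by simp [p, dslope_same, hg1]) hpne
    (fun w hw _ => ?_) hz
  have hw' := isOpen_ball.mem_nhds hw
  have hlog : logDeriv (deriv g) w = logDeriv (dslope g 0) w + logDeriv p w := by
    rw [← logDeriv_mul w (hq w hw) (hpne w hw) (hqd.differentiableAt hw')
      (hpd.differentiableAt hw')]
    refine (logDeriv_congr_nhds ?_).eq_of_nhds
    filter_upwards [hw'] with v hv
    simp [p, mul_div_cancel₀ _ (hq v hv)]
  have hp : p w = 1 + w * logDeriv (dslope g 0) w := by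
    simpa using deriv_div_dslope (hqd.differentiableAt hw') (hq w hw)
  convert hgc w hw using 2
  rw [mul_div_assoc, ← logDeriv_apply, hlog, hp]
  ring

/-- If `g` is convex univalent on the unit disk (analytic, injective, `g 0 = 0`,
`g' 0 = 1`, `g' ≠ 0` and `Re (1 + z g''/g') > 0`), then for `0 < α ≤ 1` and
`z` in the punctured disk, `Re ((g z / z) ^ α) > 1/2` (principal power). -/
theorem stmt_3 (g : ℂ → ℂ)
    (hgd : DifferentiableOn ℂ g (ball (0 : ℂ) 1))
    (hginj : Set.InjOn g (ball (0 : ℂ) 1))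
    (hg0 : g 0 = 0) (hg1 : deriv g 0 = 1)
    (hg' : ∀ z ∈ ball (0 : ℂ) 1, deriv g z ≠ 0)
    (hgc : ∀ z ∈ ball (0 : ℂ) 1, 0 < (1 + z * deriv (deriv g) z / deriv g z).re)
    (α : ℝ) (hα0 : 0 < α) (hα1 : α ≤ 1) :
    ∀ z ∈ ball (0 : ℂ) 1, z ≠ 0 → 1 / 2 < ((g z / z) ^ (α : ℂ)).re := by
  intro z hz hz0
  have hqd : DifferentiableOn ℂ (dslope g 0) (ball 0 1) :=
    (differentiableOn_dslope (ball_mem_nhds 0 one_pos)).2 hgd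
  have hq : ∀ w ∈ ball (0 : ℂ) 1, dslope g 0 w ≠ 0 := fun w hw =>
    dslope_ne_zero_of_injOn hginj (mem_ball_self one_pos) hw (by simp [hg1])
  have hlog : ∀ w ∈ ball (0 : ℂ) 1, w ≠ 0 → 1 / 2 < (1 + w * logDeriv (dslope g 0) w).re := by
    intro w hw _
    have hp := deriv_div_dslope (hqd.differentiableAt (isOpen_ball.mem_nhds hw)) (hq w hw)
    rw [sub_zero] at hp
    exact hp ▸ half_lt_re_deriv_div_dslope hgd hg1 hq hg' hgc hw
  have hgz := half_lt_re_of_half_lt_re_one_add_mul_logDeriv hqd (by simp [dslope_same, hg1]) hq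
    hlog hz
  rw [dslope_of_ne _ hz0, slope_def_field, hg0, sub_zero, sub_zero] at hgz
  exact half_lt_re_cpow hgz hα0 hα1
end

section
/- Let α > 0, let n ≥ 0 be an integer, and let 0 ≤ β < 1. Suppose F and G are analytic on E with F(0) = G(0) = 1 and Taylor expansions F(z) = Σ_{k≥0} f_k z^k, G(z) = Σ_{k≥0} g_k z^k. If F satisfies condition T_n^α(β) and Re G(z) > 1/2 for all z ∈ E, then the quasi-convolution H(z) = Σ_{k≥0} f_k g_k z^k satisfies condition T_n^α(β). -/
/-!
Write `P(z) = Σ aₖ zᵏ` and `B(z) = Σ bₖ zᵏ` with `b₀ = 1`. Fix `|z| < ρ < 1` and `w = z / ρ`.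
The weight `Q(θ) = 2 Re B(w e^{-iθ}) - 1` is real, with Fourier coefficients `bₖ wᵏ` at
`e^{-ikθ}` for `k ≥ 0` (the constant term is `2 Re b₀ - 1 = 1`), so averaging `P(ρ e^{iθ}) Q(θ)`
over the circle picks out `Σ aₖ bₖ zᵏ`, and averaging `Q` gives `1`. If `Re B > 1/2`, then
`Q > 0`, and `Re P > β` gives `Re Σ aₖ bₖ zᵏ - β = (1 / 2π) ∫ (Re P(ρ e^{iθ}) - β) Q(θ) dθ > 0`.
-/

open Complex Metric

/-- `F` (with Taylor coefficients `f`) satisfies Opoola's condition `T_n^α(β)`: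
the series `Σ ((α+k)/α)^n f_k z^k` converges on the unit disk and its sum has
real part greater than `β` there. -/
def Tcond (α : ℝ) (n : ℕ) (β : ℝ) (f : ℕ → ℂ) : Prop :=
  ∀ z ∈ ball (0 : ℂ) 1,
    Summable (fun k : ℕ => ((((α + k) / α) ^ n : ℝ) : ℂ) * f k * z ^ k) ∧
      β < (∑' k : ℕ, ((((α + k) / α) ^ n : ℝ) : ℂ) * f k * z ^ k).re

open intervalIntegral ComplexConjugate
open scoped Real

lemma integral_exp_int_mul_I (m : ℤ) :
    ∫ θ in (0 : ℝ)..2 * π, exp (m * θ * I) = if m = 0 then (2 * π : ℂ) else 0 := by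
  split_ifs with hm
  · simp [hm]
  · have hmI : (m : ℂ) * I ≠ 0 := by simp [hm, I_ne_zero]
    have hexp (θ : ℝ) : (m : ℂ) * θ * I = m * I * θ := by ring
    simp_rw [hexp]
    rw [integral_exp_mul_complex hmI, show (m : ℂ) * I * (2 * π : ℝ) = m * (2 * π * I) by
      push_cast; ring, exp_int_mul_two_pi_mul_I]
    simp

lemma hasSum_integral_of_norm_le {ι E : Type*} [Countable ι] [NormedAddCommGroup E]
    [NormedSpace ℝ E] {F : ι → ℝ → E} {f : ℝ → E} (c : ι → ℝ) (hF : ∀ i, Continuous (F i))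
    (hFc : ∀ i t, ‖F i t‖ ≤ c i) (hc : Summable c) (hf : ∀ t, HasSum (F · t) (f t)) (a b : ℝ) :
    HasSum (fun i => ∫ t in a..b, F i t) (∫ t in a..b, f t) :=
  hasSum_integral_of_dominated_convergence (fun i _ => c i)
    (fun i => (hF i).aestronglyMeasurable) (fun i => .of_forall fun t _ => hFc i t)
    (.of_forall fun _ _ => hc) intervalIntegrable_const (.of_forall fun t _ => hf t)

noncomputable def trigSeries (a : ℕ → ℂ) (θ : ℝ) : ℂ := ∑' k : ℕ, a k * exp (k * θ * I)

section trigSeries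

variable {a : ℕ → ℂ}

lemma continuous_trigSeries (ha : Summable (‖a ·‖)) : Continuous (trigSeries a) :=
  continuous_tsum (fun k => by fun_prop) ha fun k θ => by simp [norm_exp]

lemma norm_trigSeries_le (ha : Summable (‖a ·‖)) (θ : ℝ) :
    ‖trigSeries a θ‖ ≤ ∑' k, ‖a k‖ := by
  have hnorm (k : ℕ) : ‖a k * exp (k * θ * I)‖ = ‖a k‖ := by simp [norm_exp]
  simpa only [trigSeries, hnorm] using norm_tsum_le_tsum_norm (ha.congr fun k => (hnorm k).symm)

lemma conj_trigSeries (a : ℕ → ℂ) (θ : ℝ) :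
    conj (trigSeries a θ) = trigSeries (conj ∘ a) (-θ) := by
  rw [trigSeries, conj_tsum]
  refine tsum_congr fun k => ?_
  rw [map_mul, ← exp_conj]
  simp

lemma trigSeries_mul_pow (a : ℕ → ℂ) (r : ℂ) (θ : ℝ) :
    trigSeries (fun k => a k * r ^ k) θ = ∑' k, a k * (r * exp (θ * I)) ^ k := by
  refine tsum_congr fun k => ?_
  rw [mul_pow, ← Complex.exp_nat_mul]
  ring_nf

lemma integral_tsum_mul_exp (ha : Summable (‖a ·‖)) (m : ℕ → ℤ) :
    ∫ θ in (0 : ℝ)..2 * π, ∑' k, a k * exp (m k * θ * I)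
      = 2 * π * ∑' k, if m k = 0 then a k else 0 := by
  have hnorm (k : ℕ) (θ : ℝ) : ‖a k * exp (m k * θ * I)‖ = ‖a k‖ := by simp [norm_exp]
  have hsum := hasSum_integral_of_norm_le (fun k => ‖a k‖) (fun k => by fun_prop)
    (fun k θ => (hnorm k θ).le) ha
    (fun θ => (ha.of_norm_bounded fun k => (hnorm k θ).le).hasSum) 0 (2 * π)
  rw [← hsum.tsum_eq, ← tsum_mul_left]
  refine tsum_congr fun k => ?_
  rw [integral_const_mul, integral_exp_int_mul_I]
  split_ifs <;> ring

lemma integral_exp_mul_trigSeries (ha : Summable (‖a ·‖)) (j : ℕ) :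
    ∫ θ in (0 : ℝ)..2 * π, exp (j * θ * I) * trigSeries a θ
      = if j = 0 then 2 * π * a 0 else 0 := by
  have hexp (θ : ℝ) : exp (j * θ * I) * trigSeries a θ
      = ∑' k, a k * exp (((j + k : ℕ) : ℤ) * θ * I) := by
    rw [trigSeries, ← tsum_mul_left]
    refine tsum_congr fun k => ?_
    rw [mul_left_comm, ← Complex.exp_add]
    push_cast; ring_nf
  simp_rw [hexp, integral_tsum_mul_exp ha, Nat.cast_eq_zero, Nat.add_eq_zero_iff]
  split_ifs with hj <;> simp [hj]

lemma integral_exp_mul_trigSeries_neg (ha : Summable (‖a ·‖)) (j : ℕ) :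
    ∫ θ in (0 : ℝ)..2 * π, exp (j * θ * I) * trigSeries a (-θ) = 2 * π * a j := by
  have hexp (θ : ℝ) : exp (j * θ * I) * trigSeries a (-θ)
      = ∑' k, a k * exp (((j - k : ℤ) : ℂ) * θ * I) := by
    rw [trigSeries, ← tsum_mul_left]
    refine tsum_congr fun k => ?_
    rw [mul_left_comm, ← Complex.exp_add]
    push_cast; ring_nf
  simp_rw [hexp, integral_tsum_mul_exp ha (fun k => j - k), sub_eq_zero, Nat.cast_inj,
    eq_comm (a := j), tsum_ite_eq]

lemma integral_exp_mul_two_re_trigSeries_neg_sub_one (ha : Summable (‖a ·‖)) (ha0 : a 0 = 1)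
    (j : ℕ) :
    ∫ θ in (0 : ℝ)..2 * π, exp (j * θ * I) * ((2 * (trigSeries a (-θ)).re - 1 : ℝ) : ℂ)
      = 2 * π * a j := by
  -- `2 Re u - 1 = u + (conj u - 1)`; the bracket contributes nothing: its frequencies `j + k`
  -- are nonnegative and its constant coefficient is `conj (a 0) - 1 = 0`.
  have hsplit (θ : ℝ) : exp (j * θ * I) * ((2 * (trigSeries a (-θ)).re - 1 : ℝ) : ℂ)
      = exp (j * θ * I) * trigSeries a (-θ)
        + (exp (j * θ * I) * trigSeries (conj ∘ a) θ - exp ((j : ℤ) * θ * I)) := by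
    have hconj := conj_trigSeries a (-θ)
    have hre := add_conj (trigSeries a (-θ))
    rw [neg_neg] at hconj
    rw [← hconj]
    push_cast at hre ⊢
    linear_combination (-exp (j * θ * I)) * hre
  have hc := continuous_trigSeries ha
  have hc' := continuous_trigSeries (a := conj ∘ a) (by simpa using ha)
  simp_rw [hsplit]
  rw [integral_add ((by fun_prop : Continuous _).intervalIntegrable _ _)
      ((by fun_prop : Continuous _).intervalIntegrable _ _),
    integral_sub ((by fun_prop : Continuous _).intervalIntegrable _ _)
      ((by fun_prop : Continuous _).intervalIntegrable _ _),
    integral_exp_mul_trigSeries_neg ha, integral_exp_mul_trigSeries (by simpa using ha),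
    integral_exp_int_mul_I]
  split_ifs <;> simp_all

lemma integral_trigSeries_mul (ha : Summable (‖a ·‖)) {Q : ℝ → ℂ} (hQ : Continuous Q) {C : ℝ}
    (hQC : ∀ θ, ‖Q θ‖ ≤ C) :
    ∫ θ in (0 : ℝ)..2 * π, trigSeries a θ * Q θ
      = ∑' j, a j * ∫ θ in (0 : ℝ)..2 * π, exp (j * θ * I) * Q θ := by
  have hnorm (j : ℕ) (θ : ℝ) : ‖a j * (exp (j * θ * I) * Q θ)‖ ≤ ‖a j‖ * C := by
    rw [← mul_assoc, norm_mul]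
    simpa [norm_exp] using mul_le_mul_of_nonneg_left (hQC θ) (norm_nonneg (a j))
  have hsum (θ : ℝ) : HasSum (fun j => a j * (exp (j * θ * I) * Q θ)) (trigSeries a θ * Q θ) := by
    simp_rw [← mul_assoc]
    refine HasSum.mul_right _ (Summable.hasSum ?_)
    exact ha.of_norm_bounded fun k => by simp [norm_exp]
  have hsum_integral := hasSum_integral_of_norm_le (F := fun j θ => a j * (exp (j * θ * I) * Q θ))
    _ (fun j => by fun_prop) hnorm (ha.mul_right C) hsum 0 (2 * π)
  simp_rw [← hsum_integral.tsum_eq, integral_const_mul]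

end trigSeries

theorem lt_re_tsum_mul_of_lt_re_trigSeries {a b : ℕ → ℂ} {β : ℝ} (ha : Summable (‖a ·‖))
    (hb : Summable (‖b ·‖)) (hb0 : b 0 = 1) (ha_re : ∀ θ, β < (trigSeries a θ).re)
    (hb_re : ∀ θ, 1 / 2 < (trigSeries b θ).re) :
    β < (∑' k, a k * b k).re := by
  have hca := continuous_trigSeries ha
  have hcb := continuous_trigSeries hb
  obtain ⟨Q, hQ⟩ : ∃ Q : ℝ → ℂ, Q = fun θ => ((2 * (trigSeries b (-θ)).re - 1 : ℝ) : ℂ) :=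
    ⟨_, rfl⟩
  have hQ_cont : Continuous Q := hQ ▸ by fun_prop
  have hQ_le (θ : ℝ) : ‖Q θ‖ ≤ 2 * ∑' k, ‖b k‖ + 1 := by
    have := (abs_re_le_norm (trigSeries b (-θ))).trans (norm_trigSeries_le hb (-θ))
    simp only [hQ, norm_real, Real.norm_eq_abs]
    grind
  have hQ_int : ∫ θ in (0 : ℝ)..2 * π, Q θ = 2 * π := by
    simpa [hb0, hQ] using integral_exp_mul_two_re_trigSeries_neg_sub_one hb hb0 0
  have haQ_int : ∫ θ in (0 : ℝ)..2 * π, trigSeries a θ * Q θ = 2 * π * ∑' k, a k * b k := by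
    rw [integral_trigSeries_mul ha hQ_cont hQ_le, ← tsum_mul_left]
    simp_rw [hQ, integral_exp_mul_two_re_trigSeries_neg_sub_one hb hb0]
    exact tsum_congr fun k => by ring
  have hpos : 0 < (∫ θ in (0 : ℝ)..2 * π, (trigSeries a θ - β) * Q θ).re := by
    rw [← RCLike.re_to_complex,
      ← intervalIntegral_re ((by fun_prop : Continuous _).intervalIntegrable _ _)]
    refine intervalIntegral_pos_of_pos_on ((by fun_prop : Continuous _).intervalIntegrable _ _)
      (fun θ _ => ?_) (by positivity)
    have hQ_pos : 0 < 2 * (trigSeries b (-θ)).re - 1 := by linarith [hb_re (-θ)]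
    simpa [hQ] using mul_pos (sub_pos.2 (ha_re θ)) hQ_pos
  have hint : ∫ θ in (0 : ℝ)..2 * π, (trigSeries a θ - β) * Q θ
      = 2 * π * (∑' k, a k * b k - β) := by
    simp_rw [sub_mul]
    rw [integral_sub ((by fun_prop : Continuous _).intervalIntegrable _ _)
      ((by fun_prop : Continuous _).intervalIntegrable _ _), integral_const_mul, haQ_int, hQ_int]
    ring
  rw [hint] at hpos
  simpa [Real.pi_pos] using hpos

lemma summable_norm_mul_pow_of_norm_lt {𝕜 : Type*} [NormedField 𝕜] {a : ℕ → 𝕜} {w z : 𝕜}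
    (h : Summable fun k => a k * w ^ k) (hzw : ‖z‖ < ‖w‖) :
    Summable fun k => ‖a k * z ^ k‖ := by
  obtain ⟨M, hM⟩ := h.tendsto_atTop_zero.norm.bddAbove_range
  have hw : 0 < ‖w‖ := (norm_nonneg z).trans_lt hzw
  refine .of_nonneg_of_le (fun k => norm_nonneg _) (fun k => ?_)
    ((summable_geometric_of_lt_one (by positivity) ((div_lt_one hw).2 hzw)).mul_left M)
  calc ‖a k * z ^ k‖ = ‖a k * w ^ k‖ * (‖z‖ / ‖w‖) ^ k := by
        rw [norm_mul, norm_mul, norm_pow, norm_pow, div_pow]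
        field_simp
    _ ≤ M * (‖z‖ / ‖w‖) ^ k := by gcongr; exact hM ⟨k, rfl⟩

lemma summable_norm_mul_pow_of_mem_ball {a : ℕ → ℂ}
    (h : ∀ z ∈ ball (0 : ℂ) 1, Summable fun k => a k * z ^ k) {z : ℂ} (hz : z ∈ ball 0 1) :
    Summable fun k => ‖a k * z ^ k‖ := by
  obtain ⟨s, hzs, hs1⟩ := exists_between (mem_ball_zero_iff.1 hz)
  have hs : 0 < s := (norm_nonneg z).trans_lt hzs
  exact summable_norm_mul_pow_of_norm_lt (h s (by simpa [abs_of_pos hs] using hs1))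
    (by simpa [abs_of_pos hs] using hzs)

def ReGtOnUnitDisk (β : ℝ) (a : ℕ → ℂ) : Prop :=
  ∀ z ∈ ball (0 : ℂ) 1, Summable (fun k => a k * z ^ k) ∧ β < (∑' k, a k * z ^ k).re

theorem ReGtOnUnitDisk.hadamard_mul {β : ℝ} {a b : ℕ → ℂ} (ha : ReGtOnUnitDisk β a)
    (hb : ReGtOnUnitDisk (1 / 2) b) (hb0 : b 0 = 1) :
    ReGtOnUnitDisk β (fun k => a k * b k) := by
  intro z hz
  obtain ⟨ρ, hzρ, hρ1⟩ := exists_between (mem_ball_zero_iff.1 hz)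
  have hρ : 0 < ρ := (norm_nonneg z).trans_lt hzρ
  have hw1 : ‖z / ρ‖ < 1 := by
    rwa [norm_div, norm_real, Real.norm_of_nonneg hρ.le, div_lt_one hρ]
  have hmem {r : ℂ} (hr : ‖r‖ < 1) (θ : ℝ) : r * exp (θ * I) ∈ ball (0 : ℂ) 1 := by
    simpa [norm_exp_ofReal_mul_I] using hr
  have hA := summable_norm_mul_pow_of_mem_ball (fun z hz => (ha z hz).1) (z := ρ)
    (by simpa [abs_of_pos hρ] using hρ1)
  have hB := summable_norm_mul_pow_of_mem_ball (fun z hz => (hb z hz).1)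
    (mem_ball_zero_iff.2 hw1)
  have hAB (k : ℕ) : a k * (ρ : ℂ) ^ k * (b k * (z / ρ) ^ k) = a k * b k * z ^ k := by
    have hρ0 : (ρ : ℂ) ≠ 0 := ofReal_ne_zero.2 hρ.ne'
    rw [div_pow]
    field_simp
  refine ⟨?_, ?_⟩
  · refine Summable.of_norm ?_
    simpa only [Function.comp_def, hAB] using
      (hA.mul_norm hB).comp_injective (i := fun k => (k, k)) fun _ _ h => congrArg Prod.fst h
  · rw [← tsum_congr hAB]
    refine lt_re_tsum_mul_of_lt_re_trigSeries hA hB (by simp [hb0]) (fun θ => ?_) (fun θ => ?_)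
    · simpa only [trigSeries_mul_pow] using (ha _ (hmem (by simpa [abs_of_pos hρ]) θ)).2
    · simpa only [trigSeries_mul_pow] using (hb _ (hmem hw1 θ)).2

theorem stmt_7_general (α : ℝ) (n : ℕ) (β : ℝ)
    (f : ℕ → ℂ)
    (G : ℂ → ℂ) (hG0 : G 0 = 1)
    (g : ℕ → ℂ) (hGs : ∀ z ∈ ball (0 : ℂ) 1, HasSum (fun k : ℕ => g k * z ^ k) (G z))
    (hFT : Tcond α n β f) (hGre : ∀ z ∈ ball (0 : ℂ) 1, 1 / 2 < (G z).re) :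
    Tcond α n β (fun k => f k * g k) := by
  have hg : ReGtOnUnitDisk (1 / 2) g := fun z hz =>
    ⟨(hGs z hz).summable, (hGs z hz).tsum_eq ▸ hGre z hz⟩
  have hg0 : g 0 = 1 := by
    simpa [hG0] using
      (hasSum_single 0 fun k hk => by simp [hk]).unique (hGs 0 (mem_ball_self one_pos))
  have hfg := ReGtOnUnitDisk.hadamard_mul (a := fun k => ((((α + k) / α) ^ n : ℝ) : ℂ) * f k)
    hFT hg hg0
  intro z hz
  simpa only [mul_assoc] using hfg z hz

/-- If `F ∈ T_n^α(β)` and `Re G > 1/2` on the unit disk, then the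
quasi-convolution `H z = Σ f_k g_k z^k` satisfies `T_n^α(β)`. -/
theorem stmt_7 (α : ℝ) (hα : 0 < α) (n : ℕ) (β : ℝ) (hβ0 : 0 ≤ β) (hβ1 : β < 1)
    (F : ℂ → ℂ) (hFd : DifferentiableOn ℂ F (ball (0 : ℂ) 1)) (hF0 : F 0 = 1)
    (f : ℕ → ℂ) (hFs : ∀ z ∈ ball (0 : ℂ) 1, HasSum (fun k : ℕ => f k * z ^ k) (F z))
    (G : ℂ → ℂ) (hGd : DifferentiableOn ℂ G (ball (0 : ℂ) 1)) (hG0 : G 0 = 1)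
    (g : ℕ → ℂ) (hGs : ∀ z ∈ ball (0 : ℂ) 1, HasSum (fun k : ℕ => g k * z ^ k) (G z))
    (hFT : Tcond α n β f) (hGre : ∀ z ∈ ball (0 : ℂ) 1, 1 / 2 < (G z).re) :
    Tcond α n β (fun k => f k * g k) :=
  stmt_7_general α n β f G hG0 g hGs hFT hGre
end

section
/- Let σ, γ > 0 be real. Then for every z in the unit disk E = {z ∈ ℂ : |z| < 1}, Re[ (Γ(σ+γ+1)/(Γ(σ+1)Γ(γ+1))) · σ ∫₀¹ (1 − s)^{σ−1} s^{γ−1}/(1 − s z) ds ] > 1/2. -/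
/-!
Since `Re (1 - w)⁻¹ > 1/2` for `|w| < 1`, the real part of the integral is at least half the
beta integral `∫₀¹ (1-s)^(σ-1) s^(γ-1) ds = B(σ, γ)`, and the prefactor turns `B(σ, γ)` into
`C(σ+γ, γ) σ B(σ, γ) = (σ + γ)/γ > 1`.
-/

open Complex Metric MeasureTheory Set

lemma one_half_lt_re_inv_one_sub {w : ℂ} (hw : ‖w‖ < 1) : 1 / 2 < (1 - w)⁻¹.re := by
  have hne : 1 - w ≠ 0 := (Units.oneSub w hw).ne_zero
  have hnormSq : normSq (1 - w) = 1 - 2 * w.re + normSq w := by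
    simp only [normSq_apply, sub_re, sub_im, one_re, one_im]; ring
  have hw2 : normSq w < 1 := by
    rw [normSq_eq_norm_sq]; nlinarith [norm_nonneg w]
  rw [inv_re, lt_div_iff₀ (normSq_pos.mpr hne), hnormSq, sub_re, one_re]
  linarith

lemma ofReal_one_sub_rpow_mul_rpow {a b s : ℝ} (hs : s ∈ Icc (0 : ℝ) 1) :
    (((1 - s) ^ (a - 1) * s ^ (b - 1) : ℝ) : ℂ) =
      (s : ℂ) ^ ((b : ℂ) - 1) * (1 - (s : ℂ)) ^ ((a : ℂ) - 1) := by
  rw [mul_comm, ofReal_mul, ofReal_cpow hs.1, ofReal_cpow (sub_nonneg.mpr hs.2)]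
  push_cast
  rfl

lemma intervalIntegrable_one_sub_rpow_mul_rpow {a b : ℝ} (ha : 0 < a) (hb : 0 < b) :
    IntervalIntegrable (fun s : ℝ => (1 - s) ^ (a - 1) * s ^ (b - 1)) volume 0 1 := by
  have hC : IntervalIntegrable (fun s : ℝ => (((1 - s) ^ (a - 1) * s ^ (b - 1) : ℝ) : ℂ))
      volume 0 1 := by
    refine (betaIntegral_convergent (u := b) (v := a) (by simpa) (by simpa)).congr fun s hs => ?_
    rw [uIoc_of_le zero_le_one] at hs
    exact (ofReal_one_sub_rpow_mul_rpow (Ioc_subset_Icc_self hs)).symm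
  rw [intervalIntegrable_iff] at hC ⊢
  exact hC.re

lemma intervalIntegral_one_sub_rpow_mul_rpow {a b : ℝ} (ha : 0 < a) (hb : 0 < b) :
    ∫ s in (0 : ℝ)..1, (1 - s) ^ (a - 1) * s ^ (b - 1) = ProbabilityTheory.beta a b := by
  rw [ProbabilityTheory.beta_eq_betaIntegralReal a b ha hb, betaIntegral_symm, betaIntegral,
    intervalIntegral.integral_congr (g := fun s : ℝ => (((1 - s) ^ (a - 1) * s ^ (b - 1) : ℝ) : ℂ))
      fun s hs => ?_, intervalIntegral.integral_ofReal, ofReal_re]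
  rw [uIcc_of_le zero_le_one] at hs
  exact (ofReal_one_sub_rpow_mul_rpow hs).symm

lemma Gamma_binom_mul_beta {a b : ℝ} (ha : 0 < a) (hb : 0 < b) :
    Real.Gamma (a + b + 1) / (Real.Gamma (a + 1) * Real.Gamma (b + 1)) * a *
      ProbabilityTheory.beta a b = (a + b) / b := by
  have := Real.Gamma_pos_of_pos ha
  have := Real.Gamma_pos_of_pos hb
  have := Real.Gamma_pos_of_pos (add_pos ha hb)
  rw [ProbabilityTheory.beta, Real.Gamma_add_one ha.ne', Real.Gamma_add_one hb.ne',
    Real.Gamma_add_one (add_pos ha hb).ne']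
  field_simp

lemma mul_intervalIntegral_le_re_intervalIntegral_ofReal_mul {a b c : ℝ} (hab : a ≤ b)
    {w : ℝ → ℝ} {g : ℝ → ℂ} (hw : IntervalIntegrable w volume a b)
    (hw0 : ∀ s ∈ Icc a b, 0 ≤ w s) (hg : ContinuousOn g (Icc a b))
    (hc : ∀ s ∈ Icc a b, c ≤ (g s).re) :
    c * ∫ s in a..b, w s ≤ (∫ s in a..b, (w s : ℂ) * g s).re := by
  rw [← uIcc_of_le hab] at hg
  have hwg : IntervalIntegrable (fun s => (w s : ℂ) * g s) volume a b := by
    refine IntervalIntegrable.mul_continuousOn ?_ hg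
    rw [intervalIntegrable_iff] at hw ⊢
    exact hw.ofReal
  have hre := intervalIntegral.intervalIntegral_re hwg
  simp only [RCLike.re_to_complex, re_ofReal_mul] at hre
  rw [← hre, ← intervalIntegral.integral_const_mul]
  refine intervalIntegral.integral_mono_on hab (hw.const_mul c)
    (hw.mul_continuousOn (continuous_re.comp_continuousOn hg)) fun s hs => ?_
  rw [mul_comm]
  exact mul_le_mul_of_nonneg_left (hc s hs) (hw0 s hs)

/-- For real `σ, γ > 0` and `z` in the unit disk,
`Re [C(σ+γ,γ) σ ∫₀¹ (1-s)^(σ-1) s^(γ-1)/(1 - s z) ds] > 1/2`. -/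
theorem stmt_16 (σ γ : ℝ) (hσ : 0 < σ) (hγ : 0 < γ) :
    ∀ z ∈ ball (0 : ℂ) 1,
      1 / 2 < (((Real.Gamma (σ + γ + 1) /
            (Real.Gamma (σ + 1) * Real.Gamma (γ + 1)) * σ : ℝ) : ℂ) *
        ∫ s in (0 : ℝ)..1, (((1 - s) ^ (σ - 1) * s ^ (γ - 1) : ℝ) : ℂ) /
          (1 - (s : ℂ) * z)).re := by
  intro z hz
  rw [mem_ball, dist_zero_right] at hz
  have hsz : ∀ s ∈ Icc (0 : ℝ) 1, ‖(s : ℂ) * z‖ < 1 := fun s hs => by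
    rw [norm_mul, norm_real, Real.norm_of_nonneg hs.1]
    nlinarith [hs.2, norm_nonneg z]
  have hlower := mul_intervalIntegral_le_re_intervalIntegral_ofReal_mul zero_le_one
    (g := fun s : ℝ => (1 - (s : ℂ) * z)⁻¹)
    (intervalIntegrable_one_sub_rpow_mul_rpow hσ hγ)
    (fun s hs => mul_nonneg (Real.rpow_nonneg (sub_nonneg.mpr hs.2) _) (Real.rpow_nonneg hs.1 _))
    (ContinuousOn.inv₀ (f := fun s : ℝ => 1 - (s : ℂ) * z) (by fun_prop)
      fun s hs => (Units.oneSub _ (hsz s hs)).ne_zero)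
    (fun s hs => (one_half_lt_re_inv_one_sub (hsz s hs)).le)
  rw [intervalIntegral_one_sub_rpow_mul_rpow hσ hγ] at hlower
  have hbinom := Gamma_binom_mul_beta hσ hγ
  have hbeta := ProbabilityTheory.beta_pos hσ hγ
  set r := Real.Gamma (σ + γ + 1) / (Real.Gamma (σ + 1) * Real.Gamma (γ + 1)) * σ
  have hr : 0 < r := pos_of_mul_pos_left (hbinom ▸ by positivity) hbeta.le
  simp_rw [div_eq_mul_inv]
  rw [re_ofReal_mul]
  calc (1 : ℝ) / 2 < (σ + γ) / γ * (1 / 2) := by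
        rw [div_mul_eq_mul_div, lt_div_iff₀ hγ]; linarith
    _ = r * (1 / 2 * ProbabilityTheory.beta σ γ) := by rw [← hbinom]; ring
    _ ≤ _ := mul_le_mul_of_nonneg_left hlower hr.le
end

section
/- Let α > 0 and c be real numbers with α + c > 0, let n ≥ 0 be an integer, and let 0 ≤ β < 1. Suppose F is analytic on E with F(0) = 1 and F satisfies condition T_n^α(β). Define Φ : E → ℂ by Φ(z) = (α + c) ∫₀¹ s^{α+c−1} F(s z) ds (the integral over the real variable s ∈ (0,1)). Then Φ is analytic on E with Φ(0) = 1, and Φ satisfies condition T_n^α(β). -/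
open Complex Metric

/-- The `k`-th Taylor coefficient of `F` at `0`. -/
noncomputable def taylorCoeff (F : ℂ → ℂ) (k : ℕ) : ℂ :=
  iteratedDeriv k F 0 / (k.factorial : ℂ)

/-- `F` satisfies Opoola's condition `T_n^α(β)`: the series
`Σ ((α+k)/α)^n c_k z^k` (with `c_k` the Taylor coefficients of `F` at `0`)
converges on the unit disk and its sum has real part greater than `β` there. -/
def TcondF (α : ℝ) (n : ℕ) (β : ℝ) (F : ℂ → ℂ) : Prop :=
  ∀ z ∈ ball (0 : ℂ) 1,
    Summable (fun k : ℕ => ((((α + k) / α) ^ n : ℝ) : ℂ) * taylorCoeff F k * z ^ k) ∧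
      β < (∑' k : ℕ, ((((α + k) / α) ^ n : ℝ) : ℂ) * taylorCoeff F k * z ^ k).re

/-!
On the unit disk the transform `g ↦ γ ∫₀¹ s^(γ-1) g(s z) ds` (here `γ = α + c`) acts diagonally on
Taylor coefficients, multiplying the `k`-th one by `γ / (γ + k)`: integrate the power series
termwise, which is legitimate because `s^(γ-1) Σ ‖a_k z^k‖` is integrable. These multipliers commute
with the weights `((α + k) / α)^n`, so the weighted series of `Φ` is the transform of the weighted
series `G` of `F`. Finally `γ s^(γ-1) ds` is a probability measure on `(0, 1]`, so the transform
of `G` is an average of values `G(s z)` with `Re G(s z) > β`, and its real part exceeds `β` too.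
-/

open MeasureTheory intervalIntegral

section PowerSeries

variable {g : ℂ → ℂ} {b : ℕ → ℂ} {r : ℝ}

theorem taylorCoeff_zero (g : ℂ → ℂ) : taylorCoeff g 0 = g 0 := by
  simp [taylorCoeff]

theorem hasSum_taylorCoeff (hg : DifferentiableOn ℂ g (ball 0 r)) {w : ℂ}
    (hw : w ∈ ball (0 : ℂ) r) : HasSum (fun k => taylorCoeff g k * w ^ k) (g w) := by
  simpa [taylorCoeff, div_eq_inv_mul, mul_comm, mul_left_comm] using
    Complex.hasSum_taylorSeries_on_ball hg hw

theorem hasFPowerSeriesOnBall_ofScalars_of_hasSum (hr : 0 < r)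
    (hg : ∀ w ∈ ball (0 : ℂ) r, HasSum (fun k => b k * w ^ k) (g w)) :
    HasFPowerSeriesOnBall g (FormalMultilinearSeries.ofScalars ℂ b) 0 (.ofReal r) where
  r_le := by
    refine ENNReal.le_of_forall_nnreal_lt fun t ht => ?_
    refine FormalMultilinearSeries.le_radius_of_summable_norm _ ?_
    have ht' : ((t : ℝ) : ℂ) ∈ ball (0 : ℂ) r := by
      simpa [abs_of_nonneg t.coe_nonneg] using
        (ENNReal.lt_ofReal_iff_toReal_lt ENNReal.coe_ne_top).mp ht
    refine (summable_norm_iff.mpr (hg _ ht').summable).congr fun k => ?_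
    simp [abs_of_nonneg t.coe_nonneg]
  r_pos := ENNReal.ofReal_pos.mpr hr
  hasSum {w} hw := by
    rw [Metric.eball_ofReal] at hw
    simpa [FormalMultilinearSeries.ofScalars_apply_eq, mul_comm] using hg w hw

theorem taylorCoeff_eq_of_hasSum (hr : 0 < r)
    (hg : ∀ w ∈ ball (0 : ℂ) r, HasSum (fun k => b k * w ^ k) (g w)) (k : ℕ) :
    taylorCoeff g k = b k := by
  have h := (hasFPowerSeriesOnBall_ofScalars_of_hasSum hr hg).factorial_smul 1 k
  simp only [FormalMultilinearSeries.ofScalars_apply_eq, one_pow, smul_eq_mul, mul_one,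
    nsmul_eq_mul] at h
  rw [taylorCoeff, iteratedDeriv_eq_iteratedFDeriv, ← h,
    mul_div_cancel_left₀ _ (Nat.cast_ne_zero.mpr k.factorial_ne_zero)]

theorem differentiableOn_of_hasSum (hr : 0 < r)
    (hg : ∀ w ∈ ball (0 : ℂ) r, HasSum (fun k => b k * w ^ k) (g w)) :
    DifferentiableOn ℂ g (ball 0 r) := by
  simpa [Metric.eball_ofReal] using
    (hasFPowerSeriesOnBall_ofScalars_of_hasSum hr hg).differentiableOn

end PowerSeries

section Bernardi

noncomputable def bernardi (γ : ℝ) (g : ℂ → ℂ) (z : ℂ) : ℂ :=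
  (γ : ℂ) * ∫ s in (0 : ℝ)..1, ((s ^ (γ - 1) : ℝ) : ℂ) * g ((s : ℂ) * z)

variable {γ r : ℝ} {g : ℂ → ℂ} {z : ℂ}

theorem ofReal_mul_mem_ball {s : ℝ} (hs : s ∈ Set.Icc (0 : ℝ) 1) (hz : z ∈ ball (0 : ℂ) r) :
    (s : ℂ) * z ∈ ball (0 : ℂ) r := by
  rw [mem_ball_zero_iff, norm_mul, norm_real, Real.norm_of_nonneg hs.1] at *
  nlinarith [norm_nonneg z, hs.2]

theorem integral_rpow_sub_one_mul_pow (hγ : 0 < γ) (k : ℕ) :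
    ∫ s in (0 : ℝ)..1, s ^ (γ - 1) * s ^ k = 1 / (γ + k) := by
  have hk : (-1 : ℝ) < γ - 1 + k := by have := k.cast_nonneg (α := ℝ); linarith
  rw [integral_of_le zero_le_one, setIntegral_congr_fun measurableSet_Ioc
    (g := fun s => s ^ (γ - 1 + k)) fun s hs => by simp [Real.rpow_add hs.1],
    ← integral_of_le zero_le_one, integral_rpow (Or.inl hk)]
  simp [Real.zero_rpow (by linarith : γ - 1 + k + 1 ≠ 0)]
  ring_nf

theorem integral_rpow_sub_one (hγ : 0 < γ) : ∫ s in (0 : ℝ)..1, s ^ (γ - 1) = 1 / γ := by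
  simpa using integral_rpow_sub_one_mul_pow hγ 0

theorem intervalIntegrable_rpow_sub_one (hγ : 0 < γ) :
    IntervalIntegrable (fun s : ℝ => s ^ (γ - 1)) volume 0 1 :=
  intervalIntegrable_rpow' (by linarith)

theorem hasSum_bernardi (hγ : 0 < γ) {a : ℕ → ℂ}
    (hg : ∀ w ∈ ball (0 : ℂ) r, HasSum (fun k => a k * w ^ k) (g w)) (hz : z ∈ ball (0 : ℂ) r) :
    HasSum (fun k : ℕ => ((γ / (γ + k) : ℝ) : ℂ) * (a k * z ^ k)) (bernardi γ g z) := by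
  have habs : Summable fun k => ‖a k * z ^ k‖ := summable_norm_iff.mpr (hg z hz).summable
  have hterm : ∀ k : ℕ,
      (γ : ℂ) * ∫ s in (0 : ℝ)..1, ((s ^ (γ - 1) * s ^ k : ℝ) : ℂ) * (a k * z ^ k) =
      ((γ / (γ + k) : ℝ) : ℂ) * (a k * z ^ k) := fun k => by
    rw [intervalIntegral.integral_mul_const, intervalIntegral.integral_ofReal,
      integral_rpow_sub_one_mul_pow hγ, ← mul_assoc, ← ofReal_mul, mul_one_div]
  have hsum : HasSum
      (fun k : ℕ => ∫ s in (0 : ℝ)..1, ((s ^ (γ - 1) * s ^ k : ℝ) : ℂ) * (a k * z ^ k))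
      (∫ s in (0 : ℝ)..1, ((s ^ (γ - 1) : ℝ) : ℂ) * g ((s : ℂ) * z)) :=
    hasSum_integral_of_dominated_convergence
      (fun (k : ℕ) (s : ℝ) => s ^ (γ - 1) * ‖a k * z ^ k‖) (fun k => by fun_prop) ?bound
      (.of_forall fun s _ => habs.mul_left _) ?integrable ?lim
  case bound =>
    refine fun k => .of_forall fun s hs => ?_
    rw [Set.uIoc_of_le zero_le_one] at hs
    have hs0 := Real.rpow_nonneg hs.1.le (γ - 1)
    rw [norm_mul, norm_real, Real.norm_of_nonneg (mul_nonneg hs0 (pow_nonneg hs.1.le k)),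
      mul_right_comm]
    exact mul_le_of_le_one_right (by positivity) (pow_le_one₀ hs.1.le hs.2)
  case integrable =>
    simpa only [tsum_mul_left] using (intervalIntegrable_rpow_sub_one hγ).mul_const _
  case lim =>
    refine .of_forall fun s hs => ?_
    rw [Set.uIoc_of_le zero_le_one] at hs
    have hfun : (fun k : ℕ => ((s ^ (γ - 1) * s ^ k : ℝ) : ℂ) * (a k * z ^ k)) =
        fun k => ((s ^ (γ - 1) : ℝ) : ℂ) * (a k * ((s : ℂ) * z) ^ k) :=
      funext fun k => by push_cast; ring
    rw [hfun]
    exact (hg _ (ofReal_mul_mem_ball (Set.Ioc_subset_Icc_self hs) hz)).mul_left _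
  simpa only [hterm, bernardi] using hsum.mul_left (γ : ℂ)

theorem lt_re_bernardi {β : ℝ} (hγ : 0 < γ) (hg : ContinuousOn g (ball (0 : ℂ) r))
    (hβ : ∀ w ∈ ball (0 : ℂ) r, β < (g w).re) (hz : z ∈ ball (0 : ℂ) r) :
    β < (bernardi γ g z).re := by
  have hcont : ContinuousOn (fun s : ℝ => g ((s : ℂ) * z)) (Set.uIcc 0 1) := by
    rw [Set.uIcc_of_le zero_le_one]
    exact hg.comp (by fun_prop) fun s hs => ofReal_mul_mem_ball hs hz
  have hint : IntervalIntegrable (fun s : ℝ => ((s ^ (γ - 1) : ℝ) : ℂ) * g ((s : ℂ) * z))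
      volume 0 1 :=
    have hrpow := intervalIntegrable_rpow_sub_one hγ
    IntervalIntegrable.mul_continuousOn ⟨hrpow.1.ofReal, hrpow.2.ofReal⟩ hcont
  have hint_re : IntervalIntegrable (fun s : ℝ => s ^ (γ - 1) * (g ((s : ℂ) * z)).re)
      volume 0 1 :=
    (intervalIntegrable_rpow_sub_one hγ).mul_continuousOn (continuous_re.comp_continuousOn hcont)
  have hre :
      (bernardi γ g z).re = γ * ∫ s in (0 : ℝ)..1, s ^ (γ - 1) * (g ((s : ℂ) * z)).re := by
    rw [bernardi, re_ofReal_mul, ← RCLike.re_to_complex, ← intervalIntegral_re hint]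
    simp
  have hpos : 0 < ∫ s in (0 : ℝ)..1, s ^ (γ - 1) * ((g ((s : ℂ) * z)).re - β) := by
    refine intervalIntegral_pos_of_pos_on ?_ (fun s hs => ?_) zero_lt_one
    · simpa only [mul_sub] using hint_re.sub ((intervalIntegrable_rpow_sub_one hγ).mul_const β)
    · have := hβ _ (ofReal_mul_mem_ball (Set.Ioo_subset_Icc_self hs) hz)
      have := Real.rpow_pos_of_pos hs.1 (γ - 1)
      nlinarith
  simp only [mul_sub] at hpos
  rw [intervalIntegral.integral_sub hint_re ((intervalIntegrable_rpow_sub_one hγ).mul_const β),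
    intervalIntegral.integral_mul_const, integral_rpow_sub_one hγ, one_div, inv_mul_eq_div] at hpos
  rw [hre, ← div_lt_iff₀' hγ]
  linarith

end Bernardi

theorem stmt_17_general (α c : ℝ) (hac : 0 < α + c) (n : ℕ) (β : ℝ)
    (F : ℂ → ℂ) (hFd : DifferentiableOn ℂ F (ball (0 : ℂ) 1)) (hF0 : F 0 = 1)
    (hFT : TcondF α n β F)
    (Φ : ℂ → ℂ)
    (hΦ : ∀ z : ℂ, Φ z = ((α + c : ℝ) : ℂ) *
      ∫ s in (0 : ℝ)..1, ((s ^ (α + c - 1) : ℝ) : ℂ) * F ((s : ℂ) * z)) :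
    DifferentiableOn ℂ Φ (ball (0 : ℂ) 1) ∧ Φ 0 = 1 ∧ TcondF α n β Φ := by
  have hΦ' : Φ = bernardi (α + c) F := funext hΦ
  have hΦsum : ∀ z ∈ ball (0 : ℂ) 1, HasSum
      (fun k : ℕ => ((α + c) / (α + c + k) : ℝ) * taylorCoeff F k * z ^ k) (Φ z) :=
    fun z hz => by
      simpa only [hΦ', mul_assoc] using
        hasSum_bernardi hac (fun w hw => hasSum_taylorCoeff hFd hw) hz
  have hcoeff := taylorCoeff_eq_of_hasSum one_pos hΦsum
  refine ⟨differentiableOn_of_hasSum one_pos hΦsum, ?_, fun z hz => ?_⟩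
  · rw [← taylorCoeff_zero Φ, hcoeff, taylorCoeff_zero, hF0]
    simp [hac.ne']
  set G : ℂ → ℂ := fun w => ∑' k : ℕ, ((((α + k) / α) ^ n : ℝ) : ℂ) * taylorCoeff F k * w ^ k
  have hG : ∀ w ∈ ball (0 : ℂ) 1,
      HasSum (fun k : ℕ => ((((α + k) / α) ^ n : ℝ) : ℂ) * taylorCoeff F k * w ^ k) (G w) :=
    fun w hw => (hFT w hw).1.hasSum
  have hΦG : HasSum (fun k : ℕ => ((((α + k) / α) ^ n : ℝ) : ℂ) * taylorCoeff Φ k * z ^ k)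
      (bernardi (α + c) G z) := by
    simpa only [hcoeff, mul_left_comm, mul_assoc] using hasSum_bernardi hac hG hz
  refine ⟨hΦG.summable, hΦG.tsum_eq ▸ lt_re_bernardi hac ?_ (fun w hw => (hFT w hw).2) hz⟩
  exact (differentiableOn_of_hasSum one_pos hG).continuousOn

/-- Closure of `T_n^α(β)` under the Bernardi-type transform
`Φ z = (α+c) ∫₀¹ s^(α+c-1) F(s z) ds`. -/
theorem stmt_17 (α c : ℝ) (hα : 0 < α) (hac : 0 < α + c) (n : ℕ)
    (β : ℝ) (hβ0 : 0 ≤ β) (hβ1 : β < 1)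
    (F : ℂ → ℂ) (hFd : DifferentiableOn ℂ F (ball (0 : ℂ) 1)) (hF0 : F 0 = 1)
    (hFT : TcondF α n β F)
    (Φ : ℂ → ℂ)
    (hΦ : ∀ z : ℂ, Φ z = ((α + c : ℝ) : ℂ) *
      ∫ s in (0 : ℝ)..1, ((s ^ (α + c - 1) : ℝ) : ℂ) * F ((s : ℂ) * z)) :
    DifferentiableOn ℂ Φ (ball (0 : ℂ) 1) ∧ Φ 0 = 1 ∧ TcondF α n β Φ :=
  stmt_17_general α c hac n β F hFd hF0 hFT Φ hΦ
end

section
/- Let α be real with 0 < α ≤ 1, let σ > 0 be real, let n ≥ 0 be an integer, and let 0 ≤ β < 1. Suppose F is analytic on E with F(0) = 1 and F satisfies condition T_n^α(β). Define Φ : E → ℂ by Φ(z) = (2^σ/Γ(σ)) ∫₀¹ (log(1/s))^{σ−1} s^α F(s z) ds (the integral over the real variable s ∈ (0,1)). Then Φ is analytic on E and, with c_k denoting its Taylor coefficients at 0, the series Σ_{k≥0} ((α+k)/α)^n c_k z^k converges on E and its sum has real part greater than β throughout E (i.e., Φ satisfies condition T_n^α(β)). -/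
/-!
Expanding `F = Σ f_k z^k` under the integral shows that `Φ` is the power series
`Σ K m_k f_k z^k`, where `K = 2^σ/Γ(σ)` and `m_k = ∫₀¹ log(1/s)^(σ-1) s^(α+k) ds`. The multipliers
`((α+k)/α)^n` act diagonally on coefficients, so the `T`-series of `Φ` is the same transform of
the `T`-series `G` of `F`. The kernel is positive and `Re G > β`, hence the real part of that
transform exceeds `β K ∫₀¹ log(1/s)^(σ-1) s^α ds = β (2/(α+1))^σ ≥ β`; the integral is
`Γ(σ)/(α+1)^σ` after substituting `s = e^(-u)`.
-/

open Complex Metric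

open MeasureTheory Set
open scoped NNReal ENNReal

section LogPowerIntegral

variable {σ c : ℝ}

lemma image_exp_neg_Ioi : (fun u : ℝ => Real.exp (-u)) '' Ioi 0 = Ioo 0 1 := by
  ext y
  constructor
  · rintro ⟨u, hu, rfl⟩
    exact ⟨Real.exp_pos _, Real.exp_lt_one_iff.mpr (neg_lt_zero.mpr hu)⟩
  · rintro ⟨h0, h1⟩
    exact ⟨-Real.log y, neg_pos.mpr (Real.log_neg h0 h1), by simp [Real.exp_log h0]⟩

lemma hasDerivWithinAt_exp_neg (s : Set ℝ) (u : ℝ) :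
    HasDerivWithinAt (fun u : ℝ => Real.exp (-u)) (-Real.exp (-u)) s u := by
  simpa using (hasDerivAt_neg u).exp.hasDerivWithinAt

lemma injOn_exp_neg : InjOn (fun u : ℝ => Real.exp (-u)) (Ioi 0) :=
  (Real.exp_injective.comp neg_injective).injOn

lemma abs_deriv_smul_log_inv_rpow_mul_rpow_exp_neg (σ c u : ℝ) :
    |-Real.exp (-u)| • (Real.log (1 / Real.exp (-u)) ^ (σ - 1) * Real.exp (-u) ^ c)
      = u ^ (σ - 1) * Real.exp (-((c + 1) * u)) := by
  rw [one_div, ← Real.exp_neg, neg_neg, Real.log_exp, ← Real.exp_mul, abs_neg,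
    abs_of_pos (Real.exp_pos _), smul_eq_mul, mul_left_comm, ← Real.exp_add]
  ring_nf

lemma integrableOn_log_inv_rpow_mul_rpow (hσ : 0 < σ) (hc : -1 < c) :
    IntegrableOn (fun s : ℝ => Real.log (1 / s) ^ (σ - 1) * s ^ c) (Ioo 0 1) := by
  rw [← image_exp_neg_Ioi, integrableOn_image_iff_integrableOn_abs_deriv_smul measurableSet_Ioi
    (fun u _ => hasDerivWithinAt_exp_neg _ u) injOn_exp_neg]
  refine (integrableOn_rpow_mul_exp_neg_mul_rpow (s := σ - 1) (p := 1) (b := c + 1)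
    (by linarith) one_pos (by linarith)).congr_fun (fun u _ => ?_) measurableSet_Ioi
  simp only [abs_deriv_smul_log_inv_rpow_mul_rpow_exp_neg, Real.rpow_one, neg_mul]

lemma integral_log_inv_rpow_mul_rpow (hσ : 0 < σ) (hc : -1 < c) :
    ∫ s in Ioo 0 1, Real.log (1 / s) ^ (σ - 1) * s ^ c = Real.Gamma σ / (c + 1) ^ σ := by
  rw [← image_exp_neg_Ioi, integral_image_eq_integral_abs_deriv_smul measurableSet_Ioi
    (fun u _ => hasDerivWithinAt_exp_neg _ u) injOn_exp_neg]
  simp_rw [abs_deriv_smul_log_inv_rpow_mul_rpow_exp_neg]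
  rw [Real.integral_rpow_mul_exp_neg_mul_Ioi hσ (by linarith), one_div,
    Real.inv_rpow (by linarith), inv_mul_eq_div]

end LogPowerIntegral

noncomputable def jksKernel (σ α s : ℝ) : ℝ := Real.log (1 / s) ^ (σ - 1) * s ^ α

/-- The paper's `φ₂(z)^α / z^α`, as an operator on `G = f^α / z^α`. -/
noncomputable def jksTransform (σ α : ℝ) (G : ℂ → ℂ) (z : ℂ) : ℂ :=
  (((2 : ℝ) ^ σ / Real.Gamma σ : ℝ) : ℂ) *
    ∫ s in (0 : ℝ)..1, (jksKernel σ α s : ℂ) * G ((s : ℂ) * z)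

section Kernel

variable {σ α : ℝ}

lemma jksKernel_pos {s : ℝ} (hs : s ∈ Ioo (0 : ℝ) 1) : 0 < jksKernel σ α s :=
  mul_pos (Real.rpow_pos_of_pos (Real.log_pos (one_lt_one_div hs.1 hs.2)) _)
    (Real.rpow_pos_of_pos hs.1 _)

lemma integrableOn_jksKernel (hσ : 0 < σ) (hα : -1 < α) :
    IntegrableOn (jksKernel σ α) (Ioo 0 1) :=
  integrableOn_log_inv_rpow_mul_rpow hσ hα

lemma integral_jksKernel (hσ : 0 < σ) (hα : -1 < α) :
    ∫ s in Ioo 0 1, jksKernel σ α s = Real.Gamma σ / (α + 1) ^ σ :=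
  integral_log_inv_rpow_mul_rpow hσ hα

lemma one_le_two_rpow_div_gamma_mul_integral_jksKernel (hσ : 0 < σ) (hα0 : -1 < α)
    (hα1 : α ≤ 1) : 1 ≤ 2 ^ σ / Real.Gamma σ * ∫ s in Ioo 0 1, jksKernel σ α s := by
  rw [integral_jksKernel hσ hα0, div_mul_div_cancel₀ (Real.Gamma_pos_of_pos hσ).ne',
    ← Real.div_rpow zero_le_two (by linarith)]
  exact Real.one_le_rpow ((one_le_div (by linarith)).mpr (by linarith)) hσ.le

end Kernel

section PowerSeries

variable {b : ℕ → ℂ} {z : ℂ}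

lemma norm_ofReal_mul_le {s : ℝ} (hs : s ∈ Icc (0 : ℝ) 1) (z : ℂ) : ‖(s : ℂ) * z‖ ≤ ‖z‖ := by
  rw [norm_mul, norm_real, Real.norm_of_nonneg hs.1]
  exact mul_le_of_le_one_left (norm_nonneg z) hs.2

lemma ofReal_mul_mem_ball_zero {s R : ℝ} (hs : s ∈ Icc (0 : ℝ) 1) (hz : z ∈ ball (0 : ℂ) R) :
    (s : ℂ) * z ∈ ball (0 : ℂ) R :=
  mem_ball_zero_iff.mpr ((norm_ofReal_mul_le hs z).trans_lt (mem_ball_zero_iff.mp hz))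

lemma exists_norm_mul_ofReal_mul_pow_le_geometric
    (hb : ∀ z ∈ ball (0 : ℂ) 1, Summable fun k => b k * z ^ k) (hz : z ∈ ball (0 : ℂ) 1) :
    ∃ C q : ℝ, 0 ≤ q ∧ q < 1 ∧
      ∀ k, ∀ s ∈ Icc (0 : ℝ) 1, ‖b k * ((s : ℂ) * z) ^ k‖ ≤ C * q ^ k := by
  rw [mem_ball_zero_iff] at hz
  obtain ⟨r, hzr, hr1⟩ := exists_between hz
  have hr0 : 0 < r := (norm_nonneg z).trans_lt hzr
  have hr : ((r : ℝ) : ℂ) ∈ ball (0 : ℂ) 1 := by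
    rwa [mem_ball_zero_iff, norm_real, Real.norm_of_nonneg hr0.le]
  obtain ⟨C, hC⟩ := (hb _ hr).tendsto_atTop_zero.norm.bddAbove_range
  refine ⟨C, ‖z‖ / r, by positivity, (div_lt_one hr0).mpr hzr, fun k s hs => ?_⟩
  calc ‖b k * ((s : ℂ) * z) ^ k‖ ≤ ‖b k‖ * ‖z‖ ^ k := by
        rw [norm_mul, norm_pow]
        gcongr
        exact norm_ofReal_mul_le hs z
    _ = ‖b k * (r : ℂ) ^ k‖ * (‖z‖ / r) ^ k := by
        rw [norm_mul, norm_pow, norm_real, Real.norm_of_nonneg hr0.le, mul_assoc, ← mul_pow,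
          mul_div_cancel₀ _ hr0.ne']
    _ ≤ C * (‖z‖ / r) ^ k := by gcongr; exact hC (mem_range_self k)

variable {w : ℝ → ℝ} {G : ℂ → ℂ}

lemma integrableOn_ofReal_mul_comp_ofReal_mul {R : ℝ} (hw : IntegrableOn w (Ioo 0 1))
    (hG : ContinuousOn G (ball 0 R)) (hz : z ∈ ball (0 : ℂ) R) :
    IntegrableOn (fun s => (w s : ℂ) * G ((s : ℂ) * z)) (Ioo 0 1) := by
  have hcont : ContinuousOn (fun s : ℝ => G ((s : ℂ) * z)) (Icc 0 1) :=
    hG.comp (by fun_prop) fun s hs => ofReal_mul_mem_ball_zero hs hz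
  obtain ⟨C, hC⟩ := isCompact_Icc.exists_bound_of_continuousOn hcont
  refine hw.ofReal.mul_bdd (c := C)
    ((hcont.mono Ioo_subset_Icc_self).aestronglyMeasurable measurableSet_Ioo) ?_
  filter_upwards [ae_restrict_mem measurableSet_Ioo] with s hs
  exact hC s (Ioo_subset_Icc_self hs)

lemma hasSum_integral_ofReal_mul_comp_ofReal_mul (hw : IntegrableOn w (Ioo 0 1))
    (hG : ∀ z ∈ ball (0 : ℂ) 1, HasSum (fun k => b k * z ^ k) (G z)) (hz : z ∈ ball (0 : ℂ) 1) :
    HasSum (fun k => ((∫ s in Ioo 0 1, w s * s ^ k : ℝ) : ℂ) * b k * z ^ k)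
      (∫ s in Ioo 0 1, (w s : ℂ) * G ((s : ℂ) * z)) := by
  obtain ⟨C, q, hq0, hq1, hC⟩ :=
    exists_norm_mul_ofReal_mul_pow_le_geometric (fun z hz => (hG z hz).summable) hz
  have hC' : ∀ k, ∀ᵐ s : ℝ ∂volume.restrict (Ioo 0 1), ‖b k * ((s : ℂ) * z) ^ k‖ ≤ C * q ^ k :=
    fun k => by
      filter_upwards [ae_restrict_mem measurableSet_Ioo] with s hs
      exact hC k s (Ioo_subset_Icc_self hs)
  have hint : ∀ k, IntegrableOn (fun s => (w s : ℂ) * (b k * ((s : ℂ) * z) ^ k)) (Ioo 0 1) :=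
    fun k => hw.ofReal.mul_bdd (by fun_prop) (hC' k)
  have hnorm : ∀ k, ∫ s in Ioo 0 1, ‖(w s : ℂ) * (b k * ((s : ℂ) * z) ^ k)‖
      ≤ (∫ s in Ioo 0 1, ‖w s‖) * C * q ^ k := fun k => by
    rw [mul_assoc, ← integral_mul_const]
    refine integral_mono_ae (hint k).norm (hw.norm.mul_const _) ?_
    filter_upwards [hC' k] with s hs
    rw [norm_mul, norm_real]
    gcongr
  have hsum := hasSum_integral_of_summable_integral_norm hint
    (Summable.of_nonneg_of_le (fun k => integral_nonneg fun s => norm_nonneg _) hnorm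
      ((summable_geometric_of_lt_one hq0 hq1).mul_left _))
  rw [setIntegral_congr_fun measurableSet_Ioo fun s hs => by
    rw [tsum_mul_left, (hG _ (ofReal_mul_mem_ball_zero (Ioo_subset_Icc_self hs) hz)).tsum_eq]]
    at hsum
  refine hsum.congr_fun fun k => ?_
  rw [← integral_complex_ofReal, ← integral_mul_const, ← integral_mul_const]
  refine setIntegral_congr_fun measurableSet_Ioo fun s _ => ?_
  push_cast
  ring

end PowerSeries

section Taylor

variable {F : ℂ → ℂ} {c : ℕ → ℂ}

lemma hasSum_taylorCoeff_mul_pow {R : ℝ} (hF : DifferentiableOn ℂ F (ball 0 R)) {z : ℂ}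
    (hz : z ∈ ball (0 : ℂ) R) : HasSum (fun k => taylorCoeff F k * z ^ k) (F z) := by
  refine (Complex.hasSum_taylorSeries_on_ball hF hz).congr_fun fun k => ?_
  rw [taylorCoeff, sub_zero, smul_eq_mul, smul_eq_mul]
  ring

lemma hasFPowerSeriesOnBall_ofScalars_of_hasSum_s18 {R : ℝ≥0} (hR : 0 < R)
    (h : ∀ z ∈ ball (0 : ℂ) R, HasSum (fun k => c k * z ^ k) (F z)) :
    HasFPowerSeriesOnBall F (FormalMultilinearSeries.ofScalars ℂ c) 0 R where
  r_le := ENNReal.le_of_forall_nnreal_lt fun t ht => by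
    have ht' : ((t : ℝ) : ℂ) ∈ ball (0 : ℂ) R := by
      rw [mem_ball_zero_iff]
      simpa using ht
    refine FormalMultilinearSeries.le_radius_of_tendsto _ (l := 0) ?_
    simpa [FormalMultilinearSeries.ofScalars_norm] using
      (h _ ht').summable.tendsto_atTop_zero.norm
  r_pos := by simpa using hR
  hasSum hy := by
    rw [Metric.eball_coe, zero_add] at *
    simpa [FormalMultilinearSeries.ofScalars_apply_eq, mul_comm] using h _ hy

lemma HasFPowerSeriesOnBall.taylorCoeff_eq {r : ℝ≥0∞}
    (h : HasFPowerSeriesOnBall F (FormalMultilinearSeries.ofScalars ℂ c) 0 r) (k : ℕ) :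
    taylorCoeff F k = c k := by
  have hk := h.factorial_smul 1 k
  rw [FormalMultilinearSeries.ofScalars_apply_eq, one_pow, smul_eq_mul, mul_one] at hk
  rw [taylorCoeff, iteratedDeriv_eq_iteratedFDeriv, ← hk, nsmul_eq_mul,
    mul_div_cancel_left₀ _ (Nat.cast_ne_zero.mpr k.factorial_ne_zero)]

end Taylor

lemma mul_setIntegral_lt_re_setIntegral_ofReal_mul {X : Type*} [MeasurableSpace X]
    {μ : Measure X} {S : Set X} (hS : MeasurableSet S) (hμS : μ S ≠ 0) {w : X → ℝ} {g : X → ℂ}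
    {β : ℝ} (hw : IntegrableOn w S μ) (hw_pos : ∀ x ∈ S, 0 < w x)
    (hwg : IntegrableOn (fun x => (w x : ℂ) * g x) S μ) (hg : ∀ x ∈ S, β < (g x).re) :
    β * ∫ x in S, w x ∂μ < (∫ x in S, (w x : ℂ) * g x ∂μ).re := by
  have hwg_re : IntegrableOn (fun x => w x * (g x).re) S μ := by
    have h := hwg.re
    simp only [RCLike.re_to_complex, re_ofReal_mul] at h
    exact h
  have hre : (∫ x in S, (w x : ℂ) * g x ∂μ).re = ∫ x in S, w x * (g x).re ∂μ := by
    simpa only [RCLike.re_to_complex, re_ofReal_mul] using (integral_re hwg).symm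
  have hsplit : ∫ x in S, w x * ((g x).re - β) ∂μ
      = (∫ x in S, w x * (g x).re ∂μ) - (∫ x in S, w x ∂μ) * β := by
    simp only [mul_sub]
    rw [integral_sub hwg_re (hw.mul_const β), integral_mul_const]
  have hint : IntegrableOn (fun x => w x * ((g x).re - β)) S μ := by
    simp only [mul_sub]
    exact hwg_re.sub (hw.mul_const β)
  have hpos : 0 < ∫ x in S, w x * ((g x).re - β) ∂μ := by
    rw [setIntegral_pos_iff_support_of_nonneg_ae ?_ hint]
    · refine (pos_iff_ne_zero.mpr hμS).trans_le (measure_mono fun x hx => ⟨?_, hx⟩)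
      exact (mul_pos (hw_pos x hx) (sub_pos.mpr (hg x hx))).ne'
    · filter_upwards [ae_restrict_mem hS] with x hx
      exact (mul_pos (hw_pos x hx) (sub_pos.mpr (hg x hx))).le
  linarith

section Transform

variable {σ α : ℝ} {G : ℂ → ℂ} {z : ℂ}

lemma jksTransform_eq_setIntegral (σ α : ℝ) (G : ℂ → ℂ) (z : ℂ) :
    jksTransform σ α G z = (((2 : ℝ) ^ σ / Real.Gamma σ : ℝ) : ℂ) *
      ∫ s in Ioo 0 1, (jksKernel σ α s : ℂ) * G ((s : ℂ) * z) := by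
  rw [jksTransform, intervalIntegral.integral_of_le zero_le_one, integral_Ioc_eq_integral_Ioo]

lemma hasSum_jksTransform {b : ℕ → ℂ} (hσ : 0 < σ) (hα : -1 < α)
    (hG : ∀ z ∈ ball (0 : ℂ) 1, HasSum (fun k => b k * z ^ k) (G z)) (hz : z ∈ ball (0 : ℂ) 1) :
    HasSum (fun k => ((2 ^ σ / Real.Gamma σ * ∫ s in Ioo 0 1, jksKernel σ α s * s ^ k : ℝ) : ℂ) *
      b k * z ^ k) (jksTransform σ α G z) := by
  rw [jksTransform_eq_setIntegral]
  refine ((hasSum_integral_ofReal_mul_comp_ofReal_mul (integrableOn_jksKernel hσ hα) hG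
    hz).mul_left _).congr_fun fun k => ?_
  push_cast
  ring

lemma lt_re_jksTransform (hσ : 0 < σ) (hα0 : -1 < α) (hα1 : α ≤ 1) {β : ℝ} (hβ : 0 ≤ β)
    (hG : ContinuousOn G (ball 0 1)) (hGβ : ∀ z ∈ ball (0 : ℂ) 1, β < (G z).re)
    (hz : z ∈ ball (0 : ℂ) 1) : β < (jksTransform σ α G z).re := by
  have hw := integrableOn_jksKernel hσ hα0
  have hlt := mul_setIntegral_lt_re_setIntegral_ofReal_mul measurableSet_Ioo (by simp) hw
    (fun s hs => jksKernel_pos hs) (integrableOn_ofReal_mul_comp_ofReal_mul hw hG hz)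
    (fun s hs => hGβ _ (ofReal_mul_mem_ball_zero (Ioo_subset_Icc_self hs) hz))
  have hK : 0 < 2 ^ σ / Real.Gamma σ := div_pos (by positivity) (Real.Gamma_pos_of_pos hσ)
  rw [jksTransform_eq_setIntegral, re_ofReal_mul]
  calc β ≤ β * (2 ^ σ / Real.Gamma σ * ∫ s in Ioo 0 1, jksKernel σ α s) :=
        le_mul_of_one_le_right hβ (one_le_two_rpow_div_gamma_mul_integral_jksKernel hσ hα0 hα1)
    _ = 2 ^ σ / Real.Gamma σ * (β * ∫ s in Ioo 0 1, jksKernel σ α s) := by ring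
    _ < _ := mul_lt_mul_of_pos_left hlt hK

end Transform

theorem stmt_18_general (α : ℝ) (hα0 : 0 < α) (hα1 : α ≤ 1) (σ : ℝ) (hσ : 0 < σ) (n : ℕ)
    (β : ℝ) (hβ0 : 0 ≤ β)
    (F : ℂ → ℂ) (hFd : DifferentiableOn ℂ F (ball (0 : ℂ) 1))
    (hFT : TcondF α n β F)
    (Φ : ℂ → ℂ)
    (hΦ : ∀ z : ℂ, Φ z = (((2 : ℝ) ^ σ / Real.Gamma σ : ℝ) : ℂ) *
      ∫ s in (0 : ℝ)..1, ((Real.log (1 / s) ^ (σ - 1) * s ^ α : ℝ) : ℂ) * F ((s : ℂ) * z)) :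
    DifferentiableOn ℂ Φ (ball (0 : ℂ) 1) ∧ TcondF α n β Φ := by
  have hα : -1 < α := by linarith
  obtain rfl : Φ = jksTransform σ α F := funext hΦ
  have hps := hasFPowerSeriesOnBall_ofScalars_of_hasSum_s18 (F := jksTransform σ α F) one_pos
    fun z => hasSum_jksTransform hσ hα (fun _ => hasSum_taylorCoeff_mul_pow hFd)
  refine ⟨by simpa only [eball_coe, NNReal.coe_one] using hps.differentiableOn, fun z hz => ?_⟩
  set G : ℂ → ℂ := fun z => ∑' k : ℕ, ((((α + k) / α) ^ n : ℝ) : ℂ) * taylorCoeff F k * z ^ k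
  have hG : ∀ z ∈ ball (0 : ℂ) 1,
      HasSum (fun k : ℕ => ((((α + k) / α) ^ n : ℝ) : ℂ) * taylorCoeff F k * z ^ k) (G z) :=
    fun z hz => (hFT z hz).1.hasSum
  have hG_cont : ContinuousOn G (ball 0 1) := by
    simpa only [eball_coe, NNReal.coe_one] using
      (hasFPowerSeriesOnBall_ofScalars_of_hasSum_s18 one_pos hG).continuousOn
  have hTΦ : HasSum (fun k : ℕ => ((((α + k) / α) ^ n : ℝ) : ℂ) *
      taylorCoeff (jksTransform σ α F) k * z ^ k) (jksTransform σ α G z) :=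
    (hasSum_jksTransform hσ hα hG hz).congr_fun fun k => by
      rw [hps.taylorCoeff_eq]
      push_cast
      ring
  rw [hTΦ.tsum_eq]
  exact ⟨hTΦ.summable, lt_re_jksTransform hσ hα hα1 hβ0 hG_cont (fun z hz => (hFT z hz).2) hz⟩

/-- Closure of `T_n^α(β)` under the generalized Jung–Kim–Srivastava transform
`Φ z = (2^σ/Γ(σ)) ∫₀¹ (log(1/s))^(σ-1) s^α F(s z) ds`. -/
theorem stmt_18 (α : ℝ) (hα0 : 0 < α) (hα1 : α ≤ 1) (σ : ℝ) (hσ : 0 < σ) (n : ℕ)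
    (β : ℝ) (hβ0 : 0 ≤ β) (hβ1 : β < 1)
    (F : ℂ → ℂ) (hFd : DifferentiableOn ℂ F (ball (0 : ℂ) 1)) (hF0 : F 0 = 1)
    (hFT : TcondF α n β F)
    (Φ : ℂ → ℂ)
    (hΦ : ∀ z : ℂ, Φ z = (((2 : ℝ) ^ σ / Real.Gamma σ : ℝ) : ℂ) *
      ∫ s in (0 : ℝ)..1, ((Real.log (1 / s) ^ (σ - 1) * s ^ α : ℝ) : ℂ) * F ((s : ℂ) * z)) :
    DifferentiableOn ℂ Φ (ball (0 : ℂ) 1) ∧ TcondF α n β Φ :=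
  stmt_18_general α hα0 hα1 σ hσ n β hβ0 F hFd hFT Φ hΦ
end
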